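/- Let $H \subseteq G$ be an admissible subgraph of a directed acyclic graph $G$. Then there is a vector $\mathbf d = (d_v)_{v \in V(H_{comp})} \in \mathbb R^{V(H_{comp})}$ such that $\mathsf{wd}(e) + d_{s(e)} - d_{t(e)} > -1$ for every edge $e \in E(H_{comp})$, where $s(e)$ and $t(e)$ are the source and target of $e$. -/

import Mathlib

/-- Undirected adjacency underlying the subgraph `H`. -/
def UAdj {n : ℕ} (E : Set (Fin n × Fin n)) (u v : Fin n) : Prop :=
  (u, v) ∈ E ∨ (v, u) ∈ E

/-- `u` and `v` lie in the same connected component of the underlying undirected graph. -/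
def SameComp {n : ℕ} (E : Set (Fin n × Fin n)) : Fin n → Fin n → Prop :=
  Relation.ReflTransGen (UAdj E)

/-- `H ⊆ G` is admissible with respect to the weight function `w`: every directed cycle in
the component multigraph `H_comp` (a cyclic sequence of edges of `E(G) \ E(H)`, the target of
each lying in the same component of `H^un` as the source of the next) satisfies
`∑ wd(e) > -|cycle|`, where `wd(e) = w(source) - w(target)`. -/
def Admissible {n : ℕ} (E EH : Set (Fin n × Fin n)) (w : Fin n → ℤ) : Prop :=
  ∀ (k : ℕ) (c : Fin (k + 1) → Fin n × Fin n),
    (∀ i, c i ∈ E ∧ c i ∉ EH) →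
    (∀ i : Fin (k + 1), SameComp EH (c i).2 (c (i + 1)).1) →
    -((k : ℤ) + 1) < ∑ i, (w (c i).1 - w (c i).2)

/-!
Put the cost `c e = wd(e) + 1 - 1/(n+1)` on the edges of `H_comp`. By admissibility the integer
`∑ (wd(e) + 1)` over a directed cycle is at least `1`, so every cycle with at most `n` edges has
nonnegative cost. Hence cutting the repeated part out of a walk with `n + 1` edges does not
increase its cost, and `d_v`, the least cost of a walk with at most `n` edges ending in the
component of `v`, satisfies `d_t ≤ d_s + c e` for every edge `e` from `s` to `t`; that is
`wd(e) + d_s - d_t ≥ -1 + 1/(n+1)`.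
-/

namespace List

theorem exists_eq_append_cons_append_cons_of_not_nodup_map {α β : Type*} (f : α → β) :
    ∀ {l : List α}, ¬(l.map f).Nodup → ∃ l₁ x m y l₂, l = l₁ ++ x :: m ++ y :: l₂ ∧ f x = f y
  | [], h => absurd nodup_nil h
  | a :: t, h => by
    rw [map_cons, nodup_cons, not_and_or, not_not] at h
    rcases h with h | h
    · obtain ⟨y, hy, hfy⟩ := mem_map.1 h
      obtain ⟨m, l₂, rfl⟩ := append_of_mem hy
      exact ⟨[], a, m, y, l₂, by simp, hfy.symm⟩
    · obtain ⟨l₁, x, m, y, l₂, rfl, hxy⟩ := exists_eq_append_cons_append_cons_of_not_nodup_map f h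
      exact ⟨a :: l₁, x, m, y, l₂, by simp, hxy⟩

end List

section ContractedWalk

variable {V : Type*} (R : V → V → Prop) (A : Set (V × V))

/-- `l` is a walk along edges of `A` ending at `v`, in the graph in which `R`-related vertices
are identified. -/
def IsWalkTo (l : List (V × V)) (v : V) : Prop :=
  (∀ e ∈ l, e ∈ A) ∧ l.IsChain (fun a b => R a.2 b.1) ∧ ∀ e ∈ l.getLast?, R e.2 v

variable {R A}

theorem IsWalkTo.nil (v : V) : IsWalkTo R A [] v :=
  ⟨by simp, List.isChain_nil, by simp⟩

theorem IsWalkTo.of_rel [IsTrans V R] {l : List (V × V)} {u v : V} (hl : IsWalkTo R A l u)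
    (huv : R u v) : IsWalkTo R A l v :=
  ⟨hl.1, hl.2.1, fun e he => _root_.trans_of R (hl.2.2 e he) huv⟩

theorem IsWalkTo.concat [Std.Refl R] {l : List (V × V)} {e : V × V} (hl : IsWalkTo R A l e.1)
    (he : e ∈ A) : IsWalkTo R A (l ++ [e]) e.2 := by
  obtain ⟨hA, hchain, hlast⟩ := hl
  refine ⟨?_, hchain.append (List.isChain_singleton e) (by simpa using hlast), ?_⟩
  · simp only [List.mem_append, List.mem_singleton]
    rintro f (hf | rfl)
    exacts [hA f hf, he]
  · simpa using refl e.2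

variable [Fintype V] {c : V × V → ℝ}

theorem IsWalkTo.exists_length_le_card
    (hcycle : ∀ x m, IsWalkTo R A (x :: m) x.1 → m.length < Fintype.card V →
      0 ≤ ((x :: m).map c).sum)
    {l : List (V × V)} {v : V} (hl : IsWalkTo R A l v) (hlen : l.length ≤ Fintype.card V + 1) :
    ∃ l', IsWalkTo R A l' v ∧ l'.length ≤ Fintype.card V ∧ (l'.map c).sum ≤ (l.map c).sum := by
  by_cases hshort : l.length ≤ Fintype.card V
  · exact ⟨l, hl, hshort, le_rfl⟩
  have hdup : ¬(l.map Prod.fst).Nodup := fun h => hshort (by simpa using h.length_le_card)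
  -- cut out the closed walk `x :: m` between two edges leaving the same vertex
  obtain ⟨l₁, x, m, y, l₂, rfl, hxy⟩ :=
    List.exists_eq_append_cons_append_cons_of_not_nodup_map Prod.fst hdup
  obtain ⟨hA, hchain, hlast⟩ := hl
  rw [List.isChain_split, List.append_assoc, List.cons_append, List.isChain_split] at hchain
  obtain ⟨⟨hchain₁, hchain_xm⟩, hchain₂⟩ := hchain
  rw [← List.cons_append, List.isChain_append] at hchain_xm
  have hcycle_xm : IsWalkTo R A (x :: m) x.1 :=
    ⟨fun e he => hA e (List.mem_append_left _ (List.mem_append_right _ he)), hchain_xm.1,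
      by simpa [hxy] using hchain_xm.2.2⟩
  have hwalk : IsWalkTo R A (l₁ ++ y :: l₂) v := by
    refine ⟨fun e he => hA e ?_, List.isChain_split.2 ⟨?_, hchain₂⟩,
      by rwa [List.getLast?_append_cons] at hlast ⊢⟩
    · simp only [List.mem_append, List.mem_cons] at he ⊢
      tauto
    · rw [List.isChain_append] at hchain₁ ⊢
      simpa [← hxy] using hchain₁
  refine ⟨l₁ ++ y :: l₂, hwalk, by simp at hlen ⊢; omega, ?_⟩
  have := hcycle x m hcycle_xm (by simp at hlen; omega)
  simp only [List.map_append, List.map_cons, List.sum_append, List.sum_cons] at this ⊢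
  linarith

variable (R A c)

noncomputable def minWalkCost (v : V) : ℝ :=
  sInf ((fun l => (l.map c).sum) '' {l | l.length ≤ Fintype.card V ∧ IsWalkTo R A l v})

variable {R A c}

theorem finite_walkCosts (v : V) :
    ((fun l => (l.map c).sum) '' {l | l.length ≤ Fintype.card V ∧ IsWalkTo R A l v}).Finite :=
  ((List.finite_length_le _ _).subset fun _ hl => hl.1).image _

theorem minWalkCost_le {l : List (V × V)} {v : V} (hl : IsWalkTo R A l v)
    (hlen : l.length ≤ Fintype.card V) : minWalkCost R A c v ≤ (l.map c).sum :=
  csInf_le (finite_walkCosts v).bddBelow ⟨l, ⟨hlen, hl⟩, rfl⟩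

theorem exists_walk_sum_eq_minWalkCost (v : V) :
    ∃ l, IsWalkTo R A l v ∧ l.length ≤ Fintype.card V ∧ (l.map c).sum = minWalkCost R A c v := by
  have hne : {l | l.length ≤ Fintype.card V ∧ IsWalkTo R A l v}.Nonempty :=
    ⟨[], Nat.zero_le _, IsWalkTo.nil v⟩
  obtain ⟨l, ⟨hlen, hl⟩, hsum⟩ := (hne.image _).csInf_mem (finite_walkCosts (c := c) v)
  exact ⟨l, hl, hlen, hsum⟩

theorem minWalkCost_le_of_rel [IsTrans V R] {u v : V} (huv : R u v) :
    minWalkCost R A c v ≤ minWalkCost R A c u := by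
  obtain ⟨l, hl, hlen, hsum⟩ := exists_walk_sum_eq_minWalkCost (R := R) (A := A) (c := c) u
  exact hsum ▸ minWalkCost_le (hl.of_rel huv) hlen

theorem minWalkCost_le_add [Std.Refl R]
    (hcycle : ∀ x m, IsWalkTo R A (x :: m) x.1 → m.length < Fintype.card V →
      0 ≤ ((x :: m).map c).sum)
    {e : V × V} (he : e ∈ A) : minWalkCost R A c e.2 ≤ minWalkCost R A c e.1 + c e := by
  obtain ⟨l, hl, hlen, hsum⟩ := exists_walk_sum_eq_minWalkCost (R := R) (A := A) (c := c) e.1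
  obtain ⟨l', hl', hlen', hsum'⟩ :=
    (hl.concat he).exists_length_le_card hcycle (by simpa using hlen)
  calc minWalkCost R A c e.2 ≤ (l'.map c).sum := minWalkCost_le hl' hlen'
    _ ≤ ((l ++ [e]).map c).sum := hsum'
    _ = minWalkCost R A c e.1 + c e := by simp [hsum]

end ContractedWalk

section Admissible

variable {n : ℕ} {E EH : Set (Fin n × Fin n)} {w : Fin n → ℤ}

instance : Std.Symm (UAdj EH) := ⟨fun _ _ h => h.symm⟩

instance : Std.Refl (SameComp EH) := inferInstanceAs (Std.Refl (Relation.ReflTransGen _))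

instance : Std.Symm (SameComp EH) := inferInstanceAs (Std.Symm (Relation.ReflTransGen _))

instance : IsTrans (Fin n) (SameComp EH) := inferInstanceAs (IsTrans _ (Relation.ReflTransGen _))

theorem Admissible.neg_length_lt_sum (hadm : Admissible E EH w) {x : Fin n × Fin n}
    {m : List (Fin n × Fin n)} (h : IsWalkTo (SameComp EH) (E \ EH) (x :: m) x.1) :
    -((m.length : ℤ) + 1) < ((x :: m).map fun e => w e.1 - w e.2).sum := by
  obtain ⟨hA, hchain, hlast⟩ := h
  rw [← Fin.sum_univ_fun_getElem]
  refine hadm m.length (fun i => (x :: m)[(i : ℕ)]) (fun i => hA _ (List.getElem_mem _)) fun i => ?_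
  induction i using Fin.lastCases with
  | last =>
    rw [Fin.last_add_one]
    exact hlast _ (by simp [List.getLast?_eq_getElem?])
  | cast j =>
    rw [Fin.coeSucc_eq_succ]
    exact List.isChain_iff_getElem.1 hchain j (by simp)

theorem Admissible.sum_cost_nonneg (hadm : Admissible E EH w) {x : Fin n × Fin n}
    {m : List (Fin n × Fin n)} (h : IsWalkTo (SameComp EH) (E \ EH) (x :: m) x.1)
    (hm : m.length < n) :
    0 ≤ ((x :: m).map fun e => (w e.1 - w e.2 : ℝ) + (1 - 1 / (n + 1))).sum := by
  have hwd : -(m.length : ℝ) ≤ ((((x :: m).map fun e => w e.1 - w e.2).sum : ℤ) : ℝ) := by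
    have := hadm.neg_length_lt_sum h
    exact_mod_cast (by omega : -(m.length : ℤ) ≤ _)
  have hslack : ((m.length : ℝ) + 1) * (1 / (n + 1)) ≤ 1 := by
    rw [mul_one_div, div_le_one (by positivity)]
    exact_mod_cast Nat.succ_le_succ hm.le
  simp only [Int.cast_list_sum, List.map_map, Function.comp_def, Int.cast_sub] at hwd
  rw [List.sum_map_add, List.map_const', List.sum_replicate, nsmul_eq_mul, List.length_cons]
  push_cast
  linarith

end Admissible

theorem stmt14_general (n : ℕ) (E EH : Set (Fin n × Fin n))
    (w : Fin n → ℤ)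
    (hadm : Admissible E EH w) :
    ∃ d : Fin n → ℝ, (∀ u v : Fin n, SameComp EH u v → d u = d v) ∧
      ∀ e ∈ E, e ∉ EH →
        (-1 : ℝ) < ((w e.1 : ℝ) - (w e.2 : ℝ)) + d e.1 - d e.2 := by
  set c : Fin n × Fin n → ℝ := fun e => (w e.1 - w e.2 : ℝ) + (1 - 1 / (n + 1))
  have hcycle : ∀ x m, IsWalkTo (SameComp EH) (E \ EH) (x :: m) x.1 →
      m.length < Fintype.card (Fin n) → 0 ≤ ((x :: m).map c).sum :=
    fun x m h hm => hadm.sum_cost_nonneg h (by simpa using hm)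
  refine ⟨minWalkCost (SameComp EH) (E \ EH) c, fun u v huv =>
    le_antisymm (minWalkCost_le_of_rel (symm huv)) (minWalkCost_le_of_rel huv), fun e he heH => ?_⟩
  have hpotential := minWalkCost_le_add hcycle ⟨he, heH⟩
  have hslack : (0 : ℝ) < 1 / (n + 1) := by positivity
  simp only [c] at hpotential
  linarith

/-- For an admissible subgraph `H ⊆ G` there is a vector `d`, indexed by the components of
`H^un` (i.e. a function on vertices constant on components), with
`wd(e) + d_{s(e)} - d_{t(e)} > -1` for every edge `e` of `H_comp`. -/
theorem stmt14 (n : ℕ) (E EH : Set (Fin n × Fin n))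
    (hE : ∀ e ∈ E, e.1 < e.2) (hH : EH ⊆ E)
    (w : Fin n → ℤ) (hw : ∀ e ∈ EH, w e.2 = w e.1 + 1)
    (hadm : Admissible E EH w) :
    ∃ d : Fin n → ℝ, (∀ u v : Fin n, SameComp EH u v → d u = d v) ∧
      ∀ e ∈ E, e ∉ EH →
        (-1 : ℝ) < ((w e.1 : ℝ) - (w e.2 : ℝ)) + d e.1 - d e.2 :=
  stmt14_general n E EH w hadm
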